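/- The function g(c) = (2 + c^(4/3))^(3/4) / sqrt(4 + c²) on (0,∞) attains maximum value 6^(3/4)/(2√3) = (2+4)^(3/4)/sqrt(12) at c = 2^(3/2), and hence D(2) ≥ 6^(3/4)/(2√3) > 1.10. -/

import Mathlib

/-!
With `t = c^(2/3)` the fourth power of the ratio is `(2 + t²)³ / (4 + t³)²`, and
`3 (4 + t³)² - 2 (2 + t²)³ = (t - 2)² (t⁴ + 4t³ + 8t + 8)`, so it is at most `3/2`, with equality
at `t = 2`, i.e. `c = 2^(3/2)`; the value there is `6^(3/4) / (2√3) = (3/2)^(1/4) > 1.1`.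

For the bound on `D(2)`, the polynomial `z₁² - z₂² + c z₁ z₂` has coefficient `ℓ^(4/3)`-norm
`(2 + c^(4/3))^(3/4)`, and its modulus on the closed bidisc is at most `√(4 + c²)`: it is the
bilinear form of the real symmetric matrix `[[1, c/2], [c/2, -1]]`, whose eigenvalues are
`±√(1 + c²/4)`.
-/

open Finsupp Real

theorem re_sq_add_im_sq_le_one {z : ℂ} (hz : ‖z‖ ≤ 1) : z.re ^ 2 + z.im ^ 2 ≤ 1 := by
  rwa [Complex.norm_eq_sqrt_sq_add_sq, sqrt_le_one] at hz

theorem norm_sq_sub_sq_add_mul_le (c : ℝ) {a b : ℂ} (ha : ‖a‖ ≤ 1) (hb : ‖b‖ ≤ 1) :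
    ‖a ^ 2 - b ^ 2 + c * a * b‖ ≤ √(4 + c ^ 2) := by
  have ha' := re_sq_add_im_sq_le_one ha
  have hb' := re_sq_add_im_sq_le_one hb
  rw [Complex.norm_eq_sqrt_sq_add_sq]
  apply sqrt_le_sqrt
  simp only [Complex.add_re, Complex.add_im, Complex.sub_re, Complex.sub_im, Complex.mul_re,
    Complex.mul_im, Complex.ofReal_re, Complex.ofReal_im, pow_two]
  nlinarith [sq_nonneg (4 * (a.re * b.re + a.im * b.im)
      - c * ((a.re ^ 2 + a.im ^ 2) - (b.re ^ 2 + b.im ^ 2))),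
    mul_nonneg (by linarith : (0:ℝ) ≤ 2 - (a.re ^ 2 + a.im ^ 2) - (b.re ^ 2 + b.im ^ 2))
      (by positivity : (0:ℝ) ≤ (2 + (a.re ^ 2 + a.im ^ 2) + (b.re ^ 2 + b.im ^ 2)) * (4 + c ^ 2)),
    sq_nonneg (a.re * b.im - a.im * b.re)]

noncomputable def bhRatio (c : ℝ) : ℝ := (2 + c ^ ((4:ℝ) / 3)) ^ ((3:ℝ) / 4) / √(4 + c ^ 2)

theorem two_mul_two_add_sq_pow_three_le {t : ℝ} (ht : 0 ≤ t) :
    2 * (2 + t ^ 2) ^ 3 ≤ 3 * (4 + t ^ 3) ^ 2 := by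
  have h : 3 * (4 + t ^ 3) ^ 2 - 2 * (2 + t ^ 2) ^ 3 =
      (t - 2) ^ 2 * (t ^ 4 + 4 * t ^ 3 + 8 * t + 8) := by
    ring
  nlinarith [mul_nonneg (sq_nonneg (t - 2)) (by positivity : 0 ≤ t ^ 4 + 4 * t ^ 3 + 8 * t + 8)]

theorem bhRatio_pow_four {c : ℝ} (hc : 0 ≤ c) :
    bhRatio c ^ 4 = (2 + c ^ ((4:ℝ) / 3)) ^ 3 / (4 + c ^ 2) ^ 2 := by
  have h4 : ((2 + c ^ ((4:ℝ) / 3)) ^ ((3:ℝ) / 4)) ^ 4 = (2 + c ^ ((4:ℝ) / 3)) ^ 3 := by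
    rw [← rpow_natCast, ← rpow_mul (by positivity)]; norm_num
  rw [bhRatio, div_pow, h4, show (4 : ℕ) = 2 * 2 from rfl, pow_mul, sq_sqrt (by positivity)]

theorem bhRatio_pow_four_le {c : ℝ} (hc : 0 ≤ c) : bhRatio c ^ 4 ≤ 3 / 2 := by
  have h43 : c ^ ((4:ℝ) / 3) = (c ^ ((2:ℝ) / 3)) ^ 2 := by
    rw [← rpow_natCast, ← rpow_mul hc]; norm_num
  have h2 : c ^ 2 = (c ^ ((2:ℝ) / 3)) ^ 3 := by
    rw [← rpow_natCast (c ^ _), ← rpow_mul hc, ← rpow_natCast c]; norm_num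
  rw [bhRatio_pow_four hc, h43, h2, div_le_iff₀ (by positivity)]
  linarith [two_mul_two_add_sq_pow_three_le (by positivity : 0 ≤ c ^ ((2:ℝ) / 3))]

theorem two_rpow_three_halves_rpow_four_thirds :
    ((2:ℝ) ^ ((3:ℝ) / 2)) ^ ((4:ℝ) / 3) = 4 := by
  rw [← rpow_mul (by norm_num)]; norm_num

theorem two_rpow_three_halves_sq : ((2:ℝ) ^ ((3:ℝ) / 2)) ^ 2 = 8 := by
  rw [← rpow_natCast, ← rpow_mul (by norm_num)]; norm_num

theorem bhRatio_two_rpow_three_halves :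
    bhRatio (2 ^ ((3:ℝ) / 2)) = 6 ^ ((3:ℝ) / 4) / (2 * √3) := by
  rw [bhRatio, two_rpow_three_halves_rpow_four_thirds, two_rpow_three_halves_sq,
    show (4:ℝ) + 8 = 2 ^ 2 * 3 by norm_num, sqrt_mul (by positivity), sqrt_sq zero_le_two]
  norm_num

theorem six_rpow_div_two_mul_sqrt_three_pow_four :
    ((6:ℝ) ^ ((3:ℝ) / 4) / (2 * √3)) ^ 4 = 3 / 2 := by
  rw [← bhRatio_two_rpow_three_halves, bhRatio_pow_four (by positivity),
    two_rpow_three_halves_rpow_four_thirds, two_rpow_three_halves_sq]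
  norm_num

section Polydisc

variable {N : ℕ}

/-- The polynomial `∑ a_α z^α` in `N` variables, given by its coefficients `a`. -/
def polyEval (a : (Fin N →₀ ℕ) →₀ ℂ) (z : Fin N → ℂ) : ℂ :=
  ∑ α ∈ a.support, a α * ∏ i, z i ^ α i

noncomputable def polydiscSup (a : (Fin N →₀ ℕ) →₀ ℂ) : ℝ :=
  sSup {y : ℝ | ∃ z : Fin N → ℂ, (∀ i, ‖z i‖ ≤ 1) ∧ y = ‖polyEval a z‖}

theorem polydiscSup_nonneg (a : (Fin N →₀ ℕ) →₀ ℂ) : 0 ≤ polydiscSup a :=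
  Real.sSup_nonneg (by rintro _ ⟨z, -, rfl⟩; positivity)

theorem polydiscSup_le {a : (Fin N →₀ ℕ) →₀ ℂ} {M : ℝ}
    (h : ∀ z : Fin N → ℂ, (∀ i, ‖z i‖ ≤ 1) → ‖polyEval a z‖ ≤ M) : polydiscSup a ≤ M :=
  csSup_le ⟨_, 0, by simp, rfl⟩ (by rintro _ ⟨z, hz, rfl⟩; exact h z hz)

end Polydisc

/-- `D` is a Bohnenblust–Hille constant for degree `2`; `D(2)` is the least one. -/
def IsBH2Constant (D : ℝ) : Prop :=
  ∀ (N : ℕ) (a : (Fin N →₀ ℕ) →₀ ℂ), (∀ α ∈ a.support, (α.sum fun _ k => k) = 2) →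
    (∑ α ∈ a.support, ‖a α‖ ^ ((4:ℝ) / 3)) ^ ((3:ℝ) / 4) ≤ D * polydiscSup a

noncomputable def sqSubSqAddMul (c : ℂ) : (Fin 2 →₀ ℕ) →₀ ℂ :=
  single (single 0 2) 1 + single (single 1 2) (-1) + single (single 0 1 + single 1 1) c

theorem support_sqSubSqAddMul_subset (c : ℂ) :
    (sqSubSqAddMul c).support ⊆ {single 0 2, single 1 2, single 0 1 + single 1 1} := by
  classical
  refine support_add.trans <|
    Finset.union_subset (support_add.trans (Finset.union_subset ?_ ?_)) ?_ <;>
  exact support_single_subset.trans (by simp)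

theorem sum_sqSubSqAddMul {M : Type*} [AddCommMonoid M] (c : ℂ) (g : (Fin 2 →₀ ℕ) → ℂ → M)
    (hg : ∀ α, g α 0 = 0) :
    (sqSubSqAddMul c).sum g =
      g (single 0 2) 1 + g (single 1 2) (-1) + g (single 0 1 + single 1 1) c := by
  have h12 : (single 0 2 : Fin 2 →₀ ℕ) ≠ single 1 2 := fun h => by
    simpa using DFunLike.congr_fun h 0
  have h13 : (single 0 2 : Fin 2 →₀ ℕ) ≠ single 0 1 + single 1 1 := fun h => by
    simpa using DFunLike.congr_fun h 1
  have h23 : (single 1 2 : Fin 2 →₀ ℕ) ≠ single 0 1 + single 1 1 := fun h => by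
    simpa using DFunLike.congr_fun h 0
  rw [sum_of_support_subset _ (support_sqSubSqAddMul_subset c) g (fun α _ => hg α),
    Finset.sum_insert (by simp [h12, h13]), Finset.sum_insert (by simp [h23]),
    Finset.sum_singleton]
  simp [sqSubSqAddMul, h12, h13, h23, h12.symm, h13.symm, h23.symm, add_assoc]

theorem sqSubSqAddMul_homogeneous (c : ℂ) :
    ∀ α ∈ (sqSubSqAddMul c).support, (α.sum fun _ k => k) = 2 := by
  intro α hα
  have := support_sqSubSqAddMul_subset c hα
  simp only [Finset.mem_insert, Finset.mem_singleton] at this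
  rcases this with rfl | rfl | rfl <;> simp [sum_add_index']

theorem polyEval_sqSubSqAddMul (c : ℂ) (z : Fin 2 → ℂ) :
    polyEval (sqSubSqAddMul c) z = z 0 ^ 2 - z 1 ^ 2 + c * z 0 * z 1 := by
  change (sqSubSqAddMul c).sum (fun α x => x * ∏ i, z i ^ α i) = _
  rw [sum_sqSubSqAddMul c _ (fun _ => by simp)]
  simp [Fin.prod_univ_two, sub_eq_add_neg, mul_assoc]

theorem sum_norm_rpow_sqSubSqAddMul (c : ℂ) :
    ∑ α ∈ (sqSubSqAddMul c).support, ‖sqSubSqAddMul c α‖ ^ ((4:ℝ) / 3) =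
      2 + ‖c‖ ^ ((4:ℝ) / 3) := by
  change (sqSubSqAddMul c).sum (fun _ x => ‖x‖ ^ ((4:ℝ) / 3)) = _
  rw [sum_sqSubSqAddMul c _ (fun _ => by simp)]
  norm_num

theorem bhRatio_le_of_isBH2Constant {c D : ℝ} (hc : 0 ≤ c) (hD : IsBH2Constant D) :
    bhRatio c ≤ D := by
  have hBH := hD 2 (sqSubSqAddMul c) (sqSubSqAddMul_homogeneous c)
  rw [sum_norm_rpow_sqSubSqAddMul, Complex.norm_of_nonneg hc] at hBH
  have hsup : polydiscSup (sqSubSqAddMul c) ≤ √(4 + c ^ 2) := polydiscSup_le fun z hz => by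
    rw [polyEval_sqSubSqAddMul]; exact norm_sq_sub_sq_add_mul_le c (hz 0) (hz 1)
  have hlp : (0:ℝ) < (2 + c ^ ((4:ℝ) / 3)) ^ ((3:ℝ) / 4) := by positivity
  have hD0 : 0 ≤ D := (pos_of_mul_pos_left (hlp.trans_le hBH) (polydiscSup_nonneg _)).le
  exact div_le_of_le_mul₀ (by positivity) hD0 (hBH.trans (mul_le_mul_of_nonneg_left hsup hD0))

theorem stmt_15 :
    IsMaxOn
      (fun c : ℝ => (2 + c ^ ((4:ℝ) / 3)) ^ ((3:ℝ) / 4) / Real.sqrt (4 + c ^ 2))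
      (Set.Ioi (0:ℝ)) ((2:ℝ) ^ ((3:ℝ) / 2)) ∧
    (2 + ((2:ℝ) ^ ((3:ℝ) / 2)) ^ ((4:ℝ) / 3)) ^ ((3:ℝ) / 4) /
        Real.sqrt (4 + ((2:ℝ) ^ ((3:ℝ) / 2)) ^ 2) =
      (6:ℝ) ^ ((3:ℝ) / 4) / (2 * Real.sqrt 3) ∧
    (∀ D : ℝ,
      (∀ (N : ℕ) (a : (Fin N →₀ ℕ) →₀ ℂ),
        (∀ α ∈ a.support, (α.sum fun _ k => k) = 2) →
        (∑ α ∈ a.support, ‖a α‖ ^ ((4:ℝ) / 3)) ^ ((3:ℝ) / 4) ≤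
          D * sSup {y : ℝ | ∃ z : Fin N → ℂ, (∀ i, ‖z i‖ ≤ 1) ∧
            y = ‖∑ α ∈ a.support, a α * ∏ i, z i ^ α i‖}) →
      (6:ℝ) ^ ((3:ℝ) / 4) / (2 * Real.sqrt 3) ≤ D) ∧
    (1.10 : ℝ) < (6:ℝ) ^ ((3:ℝ) / 4) / (2 * Real.sqrt 3) := by
  have hvalue_nonneg : (0:ℝ) ≤ 6 ^ ((3:ℝ) / 4) / (2 * √3) := by positivity
  refine ⟨fun c hc => ?_, bhRatio_two_rpow_three_halves, fun D hD => ?_, ?_⟩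
  · show bhRatio c ≤ bhRatio _
    rw [bhRatio_two_rpow_three_halves]
    refine le_of_pow_le_pow_left₀ four_ne_zero hvalue_nonneg ?_
    rw [six_rpow_div_two_mul_sqrt_three_pow_four]
    exact bhRatio_pow_four_le hc.le
  · rw [← bhRatio_two_rpow_three_halves]
    exact bhRatio_le_of_isBH2Constant (by positivity) hD
  · refine lt_of_pow_lt_pow_left₀ 4 hvalue_nonneg ?_
    rw [six_rpow_div_two_mul_sqrt_three_pow_four]
    norm_num
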